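/- Let μ be a partition and let p₁, p₂ be two wb pairs in x_μ whose flips (performed compatibly) remove rim hooks γ₁, γ₂ from μ. If p₁ and p₂ are disjoint as intervals (and have different white dots), then γ₁ and γ₂ are disjoint rim hooks, occupying disjoint sets of rows and disjoint sets of columns; if p₁ is nested inside p₂ (the interval of p₁ lies strictly inside that of p₂), then γ₁ is nested inside γ₂, with the rows and columns of γ₁ contained among those of γ₂. -/

import Mathlib

open Finset

/-- The content of a box in position `(i, j)` is `j - i`. -/
def content (b : ℕ × ℕ) : ℤ := (b.2 : ℤ) - (b.1 : ℤ)

/-- The anticontent of a box in position `(i, j)` is `i + j`. -/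
def anticontent (b : ℕ × ℕ) : ℤ := (b.1 : ℤ) + (b.2 : ℤ)

/-- Two boxes are adjacent if they share a side. -/
def BoxAdj (a b : ℕ × ℕ) : Prop :=
  (a.1 = b.1 ∧ (a.2 + 1 = b.2 ∨ b.2 + 1 = a.2)) ∨
  (a.2 = b.2 ∧ (a.1 + 1 = b.1 ∨ b.1 + 1 = a.1))

/-- A finite set of boxes is connected if any two boxes are linked by a chain of
adjacent boxes inside the set. -/
def IsConnectedBoxes (S : Finset (ℕ × ℕ)) : Prop :=
  ∀ a ∈ S, ∀ b ∈ S,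
    Relation.ReflTransGen (fun x y => x ∈ S ∧ y ∈ S ∧ BoxAdj x y) a b

/-- A skew Young diagram: the difference of two Young diagrams `l ⊆ m`. -/
def IsSkew (S : Finset (ℕ × ℕ)) : Prop :=
  ∃ l m : YoungDiagram, l ≤ m ∧ S = m.cells \ l.cells

/-- A hook: a nonempty connected skew Young diagram with no two boxes of the same content. -/
def IsHook (S : Finset (ℕ × ℕ)) : Prop :=
  IsSkew S ∧ S.Nonempty ∧ IsConnectedBoxes S ∧
    ∀ a ∈ S, ∀ b ∈ S, content a = content b → a = b

/-- Height: number of rows occupied. -/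
def ht (S : Finset (ℕ × ℕ)) : ℕ := (S.image Prod.fst).card

/-- Width: number of columns occupied. -/
def wd (S : Finset (ℕ × ℕ)) : ℕ := (S.image Prod.snd).card

/-- Two hooks are disjoint if no box of one equals or shares a side with a box of the other. -/
def HooksDisjoint (γ δ : Finset (ℕ × ℕ)) : Prop :=
  ∀ a ∈ γ, ∀ b ∈ δ, a ≠ b ∧ ¬ BoxAdj a b

/-- `γ` is nested in `δ`: each lower and right side of a box of `γ` is shared
with another box of `γ` or a box of `δ`. -/
def NestedIn (γ δ : Finset (ℕ × ℕ)) : Prop :=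
  ∀ b ∈ γ, ((b.1 + 1, b.2) ∈ γ ∨ (b.1 + 1, b.2) ∈ δ) ∧
           ((b.1, b.2 + 1) ∈ γ ∨ (b.1, b.2 + 1) ∈ δ)

/-- A covering of `κ`: a decomposition of its boxes into connected hooks, any
two of which are disjoint or nested. -/
def IsCovering (κ : Finset (ℕ × ℕ)) (C : Finset (Finset (ℕ × ℕ))) : Prop :=
  (∀ γ ∈ C, IsHook γ) ∧
  (∀ γ ∈ C, γ ⊆ κ) ∧
  (∀ b ∈ κ, ∃! γ, γ ∈ C ∧ b ∈ γ) ∧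
  (∀ γ ∈ C, ∀ δ ∈ C, γ ≠ δ → HooksDisjoint γ δ ∨ NestedIn γ δ ∨ NestedIn δ γ)

/-- The sequence `x_λ = (λ₁, λ₂ − 1, λ₃ − 2, …)` (indexed from `0`). -/
def xseq (μ : YoungDiagram) (k : ℕ) : ℤ := (μ.rowLen k : ℤ) - (k : ℤ)

/-- `lam` is obtained from `μ` by flipping the wb pair `(lw, lb)`:
`lw < lb`, `lw` is white and `lb` is black in `x_μ`, and the black set of
`x_lam` is that of `x_μ` with `lb` replaced by `lw`. -/
def IsFlip (μ lam : YoungDiagram) (lw lb : ℤ) : Prop :=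
  lw < lb ∧ lw ∉ Set.range (xseq μ) ∧ lb ∈ Set.range (xseq μ) ∧
    Set.range (xseq lam) = insert lw (Set.range (xseq μ) \ {lb})

/-- The number of black dots of `x_μ` in the interval `[a, b]`. -/
noncomputable def blackCount (μ : YoungDiagram) (a b : ℤ) : ℕ :=
  Nat.card {n : ℤ // n ∈ Set.Icc a b ∧ n ∈ Set.range (xseq μ)}

/-- The number of white dots of `x_μ` in the interval `[a, b]`. -/
noncomputable def whiteCount (μ : YoungDiagram) (a b : ℤ) : ℕ :=
  Nat.card {n : ℤ // n ∈ Set.Icc a b ∧ n ∉ Set.range (xseq μ)}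

/-!
Encode `x_μ` by the counts `blackAbove μ t` of black dots at positions `≥ t`, so that
`t ≤ x_μ i ↔ i < blackAbove μ t`. Flipping a wb pair `(w, b)` lowers `blackAbove μ t` by one
exactly when `w < t ≤ b`; hence row `i` loses boxes iff `w < x_μ i ≤ b`, and the removed boxes have
contents in `[w, b)`. Disjoint pairs thus give hooks whose contents differ by at least two, and for
nested pairs every row of `γ₁` is a row of `γ₂`, where `γ₂` starts right after `γ₁` ends.
Columns are rows of the conjugate partition, whose Maya diagram is the complement of `x_μ`
reflected by `n ↦ 1 - n`, so each column statement is the row statement for the transposes.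
-/
theorem StrictAnti.apply_le_apply_zero_sub {x : ℕ → ℤ} (hx : StrictAnti x) (i : ℕ) :
    x i ≤ x 0 - i := by
  induction i with
  | zero => simp
  | succ n ih =>
    have : x (n + 1) < x n := hx (by omega)
    push_cast
    omega

theorem StrictAnti.exists_preimage_Ici_eq_Iio {x : ℕ → ℤ} (hx : StrictAnti x) (t : ℤ) :
    ∃ c, x ⁻¹' Set.Ici t = Set.Iio c := by
  have hex : ∃ i, x i < t :=
    ⟨(x 0 - t + 1).toNat, by have := hx.apply_le_apply_zero_sub (x 0 - t + 1).toNat; omega⟩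
  refine ⟨Nat.find hex, Set.ext fun i => ⟨fun hi => ?_, fun hi => not_lt.1 (Nat.find_min hex hi)⟩⟩
  by_contra hc
  have hle : t ≤ x i := hi
  have hfind : x (Nat.find hex) < t := Nat.find_spec hex
  have := hx.antitone (not_lt.1 hc)
  omega

theorem StrictAnti.finite_range_inter_Ici {x : ℕ → ℤ} (hx : StrictAnti x) (t : ℤ) :
    (Set.range x ∩ Set.Ici t).Finite := by
  obtain ⟨c, hc⟩ := hx.exists_preimage_Ici_eq_Iio t
  rw [← Set.image_preimage_eq_range_inter, hc]
  exact (Set.finite_Iio c).image x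

theorem StrictAnti.le_apply_iff_lt_ncard {x : ℕ → ℤ} (hx : StrictAnti x) {t : ℤ} {i : ℕ} :
    t ≤ x i ↔ i < (Set.range x ∩ Set.Ici t).ncard := by
  obtain ⟨c, hc⟩ := hx.exists_preimage_Ici_eq_Iio t
  rw [← Set.image_preimage_eq_range_inter, Set.ncard_image_of_injective _ hx.injective, hc,
    Set.ncard_Iio_nat, ← Set.mem_Iio, ← hc]
  rfl

theorem ncard_insert_sdiff_inter_Ici {S : Set ℤ} {w b t : ℤ} (hS : (S ∩ Set.Ici t).Finite)
    (hw : w ∉ S) (hb : b ∈ S) (hwb : w < b) :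
    (insert w (S \ {b}) ∩ Set.Ici t).ncard + (if w < t ∧ t ≤ b then 1 else 0) =
      (S ∩ Set.Ici t).ncard := by
  by_cases htw : t ≤ w
  · have hb' : b ∈ S ∩ Set.Ici t := ⟨hb, Set.mem_Ici.2 (by omega)⟩
    rw [Set.insert_inter_of_mem (Set.mem_Ici.2 htw), Set.sdiff_inter_right_comm,
      Set.ncard_insert_of_notMem (fun h => hw h.1.1) hS.sdiff,
      Set.ncard_sdiff_singleton_add_one hb' hS, if_neg (by omega), add_zero]
  rw [Set.insert_inter_of_notMem (fun h => htw (Set.mem_Ici.1 h)), Set.sdiff_inter_right_comm]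
  by_cases htb : t ≤ b
  · have hb' : b ∈ S ∩ Set.Ici t := ⟨hb, Set.mem_Ici.2 htb⟩
    rw [if_pos (show w < t ∧ t ≤ b from ⟨by omega, htb⟩), Set.ncard_sdiff_singleton_add_one hb' hS]
  · rw [if_neg (by omega), Set.sdiff_singleton_eq_self (fun h => htb (Set.mem_Ici.1 h.2)),
      add_zero]

noncomputable def blackAbove (μ : YoungDiagram) (t : ℤ) : ℕ :=
  (Set.range (xseq μ) ∩ Set.Ici t).ncard

theorem xseq_strictAnti (μ : YoungDiagram) : StrictAnti (xseq μ) :=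
  strictAnti_nat_of_succ_lt fun n => by
    have := μ.rowLen_anti n (n + 1) n.le_succ
    simp only [xseq]
    push_cast
    omega

theorem le_xseq_iff_lt_blackAbove {μ : YoungDiagram} {t : ℤ} {i : ℕ} :
    t ≤ xseq μ i ↔ i < blackAbove μ t :=
  (xseq_strictAnti μ).le_apply_iff_lt_ncard

theorem xseq_lt_of_blackAbove_le {μ : YoungDiagram} {t : ℤ} {i : ℕ} (h : blackAbove μ t ≤ i) :
    xseq μ i < t :=
  not_le.1 fun h' => (le_xseq_iff_lt_blackAbove.1 h').not_ge h

theorem mem_iff_lt_xseq {μ : YoungDiagram} {i j : ℕ} : (i, j) ∈ μ ↔ (j : ℤ) - i < xseq μ i := by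
  rw [YoungDiagram.mem_iff_lt_rowLen, xseq]
  omega

theorem mem_cells_sdiff_iff {μ ν : YoungDiagram} {i j : ℕ} :
    (i, j) ∈ μ.cells \ ν.cells ↔ xseq ν i ≤ (j : ℤ) - i ∧ (j : ℤ) - i < xseq μ i := by
  rw [Finset.mem_sdiff, YoungDiagram.mem_cells, YoungDiagram.mem_cells, mem_iff_lt_xseq,
    mem_iff_lt_xseq, not_lt, and_comm]

theorem mem_image_fst_cells_sdiff_iff {μ ν : YoungDiagram} {i : ℕ} :
    i ∈ (μ.cells \ ν.cells).image Prod.fst ↔ xseq ν i < xseq μ i := by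
  constructor
  · intro h
    obtain ⟨⟨i, j⟩, hc, rfl⟩ := Finset.mem_image.1 h
    obtain ⟨h₁, h₂⟩ := mem_cells_sdiff_iff.1 hc
    exact h₁.trans_lt h₂
  · intro h
    refine Finset.mem_image.2 ⟨(i, μ.rowLen i - 1), mem_cells_sdiff_iff.2 ?_, rfl⟩
    simp only [xseq] at h ⊢
    omega

theorem mem_range_xseq_transpose (μ : YoungDiagram) (n : ℤ) :
    n ∈ Set.range (xseq μ.transpose) ↔ 1 - n ∉ Set.range (xseq μ) := by
  constructor
  · -- `colLen j - j + rowLen i - i = 1` would put `(i, j)` neither inside nor outside `μ`.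
    rintro ⟨j, rfl⟩ ⟨i, hi⟩
    have := (μ.mem_iff_lt_colLen (i := i) (j := j)).symm.trans μ.mem_iff_lt_rowLen
    simp only [xseq, YoungDiagram.rowLen_transpose] at hi
    omega
  · -- Column `j = c - n` has length `c`, where `x_μ` has `c` black dots above `1 - n`.
    intro hn
    set c := blackAbove μ (1 - n)
    have hc : xseq μ c < 1 - n := xseq_lt_of_blackAbove_le le_rfl
    have hc₀ : (0 : ℤ) ≤ μ.rowLen c := Int.natCast_nonneg _
    obtain ⟨j, hj⟩ : ∃ j : ℕ, (j : ℤ) = c - n := ⟨(c - n).toNat, by simp only [xseq] at hc; omega⟩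
    have hout : (c, j) ∉ μ := by rw [mem_iff_lt_xseq]; omega
    have hge : c ≤ μ.colLen j := by
      rcases Nat.eq_zero_or_pos c with h0 | h0
      · omega
      have hk : 1 - n ≤ xseq μ (c - 1) := le_xseq_iff_lt_blackAbove.2 (by omega)
      have hk' : xseq μ (c - 1) ≠ 1 - n := fun h => hn ⟨c - 1, h⟩
      have hin : (c - 1, j) ∈ μ := by rw [mem_iff_lt_xseq]; omega
      have := YoungDiagram.mem_iff_lt_colLen.1 hin
      omega
    rw [YoungDiagram.mem_iff_lt_colLen, not_lt] at hout
    refine ⟨j, ?_⟩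
    simp only [xseq, YoungDiagram.rowLen_transpose]
    omega

namespace IsFlip

variable {μ ν : YoungDiagram} {w b : ℤ}

theorem blackAbove_add (h : IsFlip μ ν w b) (t : ℤ) :
    blackAbove ν t + (if w < t ∧ t ≤ b then 1 else 0) = blackAbove μ t := by
  rw [blackAbove, h.2.2.2]
  exact ncard_insert_sdiff_inter_Ici ((xseq_strictAnti μ).finite_range_inter_Ici t)
    h.2.1 h.2.2.1 h.1

theorem xseq_le (h : IsFlip μ ν w b) (i : ℕ) : xseq ν i ≤ xseq μ i := by
  have hν : i < blackAbove ν (xseq ν i) := le_xseq_iff_lt_blackAbove.1 le_rfl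
  have := h.blackAbove_add (xseq ν i)
  exact le_xseq_iff_lt_blackAbove.2 (by split_ifs at this <;> omega)

theorem xseq_lt_iff (h : IsFlip μ ν w b) (i : ℕ) :
    xseq ν i < xseq μ i ↔ w < xseq μ i ∧ xseq μ i ≤ b := by
  have hμ : i < blackAbove μ (xseq μ i) := le_xseq_iff_lt_blackAbove.1 le_rfl
  have hμ' : ¬ i + 1 < blackAbove μ (xseq μ i) := fun h' =>
    (xseq_strictAnti μ i.lt_succ_self).not_ge (le_xseq_iff_lt_blackAbove.2 h')
  have := h.blackAbove_add (xseq μ i)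
  rw [← not_le, le_xseq_iff_lt_blackAbove]
  split_ifs at this with hc
  · exact iff_of_true (by omega) hc
  · exact iff_of_false (by omega) hc

theorem le_xseq_of_xseq_lt (h : IsFlip μ ν w b) {i : ℕ} (hi : xseq ν i < xseq μ i) :
    w ≤ xseq ν i := by
  have hμ : i < blackAbove μ (xseq ν i + 1) := le_xseq_iff_lt_blackAbove.1 hi
  have hν : ¬ i < blackAbove ν (xseq ν i + 1) := fun h' => by
    have := le_xseq_iff_lt_blackAbove.2 h'
    omega
  have := h.blackAbove_add (xseq ν i + 1)
  split_ifs at this with hc <;> omega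

theorem content_mem_Ico (h : IsFlip μ ν w b) {c : ℕ × ℕ} (hc : c ∈ μ.cells \ ν.cells) :
    content c ∈ Set.Ico w b := by
  obtain ⟨i, j⟩ := c
  obtain ⟨h₁, h₂⟩ := mem_cells_sdiff_iff.1 hc
  have hw := h.le_xseq_of_xseq_lt (h₁.trans_lt h₂)
  have hb := ((h.xseq_lt_iff i).1 (h₁.trans_lt h₂)).2
  exact ⟨by rw [content]; omega, by rw [content]; omega⟩

theorem transpose (h : IsFlip μ ν w b) : IsFlip μ.transpose ν.transpose (1 - b) (1 - w) := by
  obtain ⟨hwb, hw, hb, hR⟩ := h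
  refine ⟨by omega, by rwa [mem_range_xseq_transpose, sub_sub_cancel, not_not],
    by rwa [mem_range_xseq_transpose, sub_sub_cancel], Set.ext fun n => ?_⟩
  simp only [Set.mem_insert_iff, Set.mem_sdiff, Set.mem_singleton_iff, mem_range_xseq_transpose,
    hR]
  rw [show n = 1 - b ↔ 1 - n = b from ⟨fun h => by omega, fun h => by omega⟩,
    show n = 1 - w ↔ 1 - n = w from ⟨fun h => by omega, fun h => by omega⟩]
  generalize 1 - n = m
  by_cases hmb : m = b <;> by_cases hmw : m = w <;> simp_all

end IsFlip

theorem swap_mem_transpose_cells_sdiff {μ ν : YoungDiagram} {c : ℕ × ℕ} :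
    c.swap ∈ μ.transpose.cells \ ν.transpose.cells ↔ c ∈ μ.cells \ ν.cells := by
  simp only [Finset.mem_sdiff, YoungDiagram.mem_cells, YoungDiagram.mem_transpose, Prod.swap_swap]

theorem image_snd_cells_sdiff_eq (μ ν : YoungDiagram) :
    (μ.cells \ ν.cells).image Prod.snd =
      (μ.transpose.cells \ ν.transpose.cells).image Prod.fst := by
  ext j
  simp only [Finset.mem_image]
  constructor
  · rintro ⟨c, hc, rfl⟩
    exact ⟨c.swap, swap_mem_transpose_cells_sdiff.2 hc, rfl⟩
  · rintro ⟨c, hc, rfl⟩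
    exact ⟨c.swap, swap_mem_transpose_cells_sdiff.1 (by rwa [Prod.swap_swap]), rfl⟩

theorem BoxAdj.content_eq {a c : ℕ × ℕ} (h : BoxAdj a c) :
    content a = content c + 1 ∨ content c = content a + 1 := by
  obtain ⟨a₁, a₂⟩ := a
  obtain ⟨c₁, c₂⟩ := c
  simp only [BoxAdj, content] at h ⊢
  omega

theorem hooksDisjoint_of_content_mem_Ico {γ δ : Finset (ℕ × ℕ)} {w₁ b₁ w₂ b₂ : ℤ}
    (hγ : ∀ a ∈ γ, content a ∈ Set.Ico w₁ b₁) (hδ : ∀ c ∈ δ, content c ∈ Set.Ico w₂ b₂)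
    (h : b₁ < w₂ ∨ b₂ < w₁) : HooksDisjoint γ δ := by
  intro a ha c hc
  obtain ⟨ha₁, ha₂⟩ := hγ a ha
  obtain ⟨hc₁, hc₂⟩ := hδ c hc
  refine ⟨fun hac => ?_, fun hadj => ?_⟩
  · subst hac
    omega
  · have := hadj.content_eq
    omega

theorem mem_or_mem_of_image_fst_subset {μ ν lam : YoungDiagram}
    (hsub : (ν.cells \ lam.cells).image Prod.fst ⊆ (μ.cells \ ν.cells).image Prod.fst)
    {i j : ℕ} (hc : (i, j) ∈ ν.cells \ lam.cells) :
    (i, j + 1) ∈ ν.cells \ lam.cells ∨ (i, j + 1) ∈ μ.cells \ ν.cells := by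
  have hrow : xseq ν i < xseq μ i :=
    mem_image_fst_cells_sdiff_iff.1 (hsub (Finset.mem_image_of_mem Prod.fst hc))
  obtain ⟨h₁, h₂⟩ := mem_cells_sdiff_iff.1 hc
  rw [mem_cells_sdiff_iff, mem_cells_sdiff_iff]
  push_cast
  omega

theorem nestedIn_of_image_subset {μ ν lam : YoungDiagram}
    (hrow : (ν.cells \ lam.cells).image Prod.fst ⊆ (μ.cells \ ν.cells).image Prod.fst)
    (hcol : (ν.cells \ lam.cells).image Prod.snd ⊆ (μ.cells \ ν.cells).image Prod.snd) :
    NestedIn (ν.cells \ lam.cells) (μ.cells \ ν.cells) := by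
  rintro ⟨i, j⟩ hc
  refine ⟨?_, mem_or_mem_of_image_fst_subset hrow hc⟩
  rw [image_snd_cells_sdiff_eq, image_snd_cells_sdiff_eq] at hcol
  exact (mem_or_mem_of_image_fst_subset hcol (swap_mem_transpose_cells_sdiff.2 hc)).imp
    (swap_mem_transpose_cells_sdiff (c := (i + 1, j))).1
    (swap_mem_transpose_cells_sdiff (c := (i + 1, j))).1

section TwoFlips

variable {μ ν lam : YoungDiagram} {lw₁ lb₁ lw₂ lb₂ : ℤ}

theorem disjoint_image_fst_of_flips (h₂ : IsFlip μ ν lw₂ lb₂) (h₁ : IsFlip ν lam lw₁ lb₁)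
    (hd : lb₁ < lw₂ ∨ lb₂ < lw₁) :
    Disjoint ((ν.cells \ lam.cells).image Prod.fst) ((μ.cells \ ν.cells).image Prod.fst) := by
  refine Finset.disjoint_left.2 fun i hi₁ hi₂ => ?_
  rw [mem_image_fst_cells_sdiff_iff] at hi₁ hi₂
  have := (h₁.xseq_lt_iff i).1 hi₁
  have := (h₂.xseq_lt_iff i).1 hi₂
  have := h₂.le_xseq_of_xseq_lt hi₂
  omega

theorem image_fst_subset_of_flips (h₂ : IsFlip μ ν lw₂ lb₂) (h₁ : IsFlip ν lam lw₁ lb₁)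
    (hn : lw₂ < lw₁ ∧ lb₁ < lb₂) :
    (ν.cells \ lam.cells).image Prod.fst ⊆ (μ.cells \ ν.cells).image Prod.fst := by
  intro i hi
  rw [mem_image_fst_cells_sdiff_iff] at hi ⊢
  have := (h₁.xseq_lt_iff i).1 hi
  have := h₂.xseq_le i
  by_contra hge
  have := (h₂.xseq_lt_iff i).2 ⟨by omega, by omega⟩
  omega

end TwoFlips

theorem flips_disjoint_or_nested_general (μ ν lam : YoungDiagram) (lw₁ lb₁ lw₂ lb₂ : ℤ)
    (h₂ : IsFlip μ ν lw₂ lb₂) (h₁ : IsFlip ν lam lw₁ lb₁) :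
    ((lb₁ < lw₂ ∨ lb₂ < lw₁) →
      HooksDisjoint (ν.cells \ lam.cells) (μ.cells \ ν.cells) ∧
      Disjoint ((ν.cells \ lam.cells).image Prod.fst)
        ((μ.cells \ ν.cells).image Prod.fst) ∧
      Disjoint ((ν.cells \ lam.cells).image Prod.snd)
        ((μ.cells \ ν.cells).image Prod.snd)) ∧
    ((lw₂ < lw₁ ∧ lb₁ < lb₂) →
      NestedIn (ν.cells \ lam.cells) (μ.cells \ ν.cells) ∧
      (ν.cells \ lam.cells).image Prod.fst ⊆ (μ.cells \ ν.cells).image Prod.fst ∧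
      (ν.cells \ lam.cells).image Prod.snd ⊆ (μ.cells \ ν.cells).image Prod.snd) := by
  refine ⟨fun hd => ⟨?_, disjoint_image_fst_of_flips h₂ h₁ hd, ?_⟩, fun hn => ?_⟩
  · exact hooksDisjoint_of_content_mem_Ico (fun _ => h₁.content_mem_Ico)
      (fun _ => h₂.content_mem_Ico) hd
  · rw [image_snd_cells_sdiff_eq, image_snd_cells_sdiff_eq]
    exact disjoint_image_fst_of_flips h₂.transpose h₁.transpose (by omega)
  · have hrow := image_fst_subset_of_flips h₂ h₁ hn
    have hcol : (ν.cells \ lam.cells).image Prod.snd ⊆ (μ.cells \ ν.cells).image Prod.snd := by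
      rw [image_snd_cells_sdiff_eq, image_snd_cells_sdiff_eq]
      exact image_fst_subset_of_flips h₂.transpose h₁.transpose ⟨by omega, by omega⟩
    exact ⟨nestedIn_of_image_subset hrow hcol, hrow, hcol⟩

/-- Flipping two wb pairs compatibly (first `(lw₂, lb₂)` in `x_μ`, giving `ν`,
then `(lw₁, lb₁)` in `x_ν`) removes rim hooks `γ₂ = μ/ν` and `γ₁ = ν/λ`.
If the pairs are disjoint as intervals then the rim hooks are disjoint, with
disjoint sets of rows and of columns; if the first pair is nested strictly
inside the second then `γ₁` is nested in `γ₂`, with its rows and columns among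
those of `γ₂`. -/
theorem flips_disjoint_or_nested (μ ν lam : YoungDiagram) (lw₁ lb₁ lw₂ lb₂ : ℤ)
    (h₂ : IsFlip μ ν lw₂ lb₂) (h₁ : IsFlip ν lam lw₁ lb₁)
    (hw₁ : lw₁ ∉ Set.range (xseq μ)) (hb₁ : lb₁ ∈ Set.range (xseq μ)) :
    ((lb₁ < lw₂ ∨ lb₂ < lw₁) →
      HooksDisjoint (ν.cells \ lam.cells) (μ.cells \ ν.cells) ∧
      Disjoint ((ν.cells \ lam.cells).image Prod.fst)
        ((μ.cells \ ν.cells).image Prod.fst) ∧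
      Disjoint ((ν.cells \ lam.cells).image Prod.snd)
        ((μ.cells \ ν.cells).image Prod.snd)) ∧
    ((lw₂ < lw₁ ∧ lb₁ < lb₂) →
      NestedIn (ν.cells \ lam.cells) (μ.cells \ ν.cells) ∧
      (ν.cells \ lam.cells).image Prod.fst ⊆ (μ.cells \ ν.cells).image Prod.fst ∧
      (ν.cells \ lam.cells).image Prod.snd ⊆ (μ.cells \ ν.cells).image Prod.snd) :=
  flips_disjoint_or_nested_general μ ν lam lw₁ lb₁ lw₂ lb₂ h₂ h₁
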